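/- arXiv:1801.02793 — 11 statements merged into one kernel-verified Lean document; each statement's English description precedes it below -/
import Mathlib

section
/- For every integer c ≥ 1 there exists an integer N₀ (depending only on c) such that for every integer N ≥ N₀ there exists a family S of N^c subsets of a universe of size N², each subset of size N, such that for every two distinct sets A, B ∈ S one has |A ∩ B| < 2·c·log N, where log denotes the natural logarithm. -/
open Polynomial Finset

private lemma aux_coeff {K : Type*} [Field K] (d : ℕ) (v : Fin d → K) (j : ℕ) :
    (∑ i : Fin d, Polynomial.C (v i) * Polynomial.X ^ (i : ℕ)).coeff j
      = if h : j < d then v ⟨j, h⟩ else 0 := by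
  rw [Polynomial.finset_sum_coeff]
  simp only [Polynomial.coeff_C_mul, Polynomial.coeff_X_pow, mul_ite, mul_one, mul_zero]
  split
  · next h =>
    rw [Finset.sum_eq_single (⟨j, h⟩ : Fin d)]
    · simp
    · intro b _ hb
      simp only [ite_eq_right_iff]
      intro hbj
      exact absurd (Fin.ext hbj.symm) hb
    · simp
  · next h =>
    apply Finset.sum_eq_zero
    intro i _
    simp only [ite_eq_right_iff]
    intro hij
    exact absurd (hij ▸ i.2) h

private lemma aux_deg {K : Type*} [Field K] (d : ℕ) (hd : 1 ≤ d) (v : Fin d → K) :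
    (∑ i : Fin d, Polynomial.C (v i) * Polynomial.X ^ (i : ℕ)).natDegree ≤ d - 1 := by
  apply Polynomial.natDegree_sum_le_of_forall_le
  intro i _
  calc (Polynomial.C (v i) * Polynomial.X ^ (i : ℕ)).natDegree
      ≤ (Polynomial.X ^ (i : ℕ) : Polynomial K).natDegree := Polynomial.natDegree_C_mul_le _ _
    _ = (i : ℕ) := Polynomial.natDegree_X_pow _
    _ ≤ d - 1 := by omega

private lemma aux_roots {K : Type*} [Field K] [DecidableEq K] (q : Polynomial K) (hq : q ≠ 0)
    (s : Finset K) (hs : ∀ x ∈ s, q.eval x = 0) : s.card ≤ q.natDegree := by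
  have h1 : s ⊆ q.roots.toFinset := by
    intro x hx
    rw [Multiset.mem_toFinset, Polynomial.mem_roots hq]
    exact hs x hx
  calc s.card ≤ q.roots.toFinset.card := Finset.card_le_card h1
    _ ≤ Multiset.card q.roots := Multiset.toFinset_card_le _
    _ ≤ q.natDegree := Polynomial.card_roots' q

/-- For every integer `c ≥ 1` there exists `N₀` such that for every `N ≥ N₀` there is a
family of `N^c` subsets of a universe of size `N²`, each of size `N`, with pairwise
intersections of size strictly less than `2 c log N`. -/
theorem rnd_pairwise_intersection_r_eq_one :
    ∀ c : ℕ, 1 ≤ c →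
      ∃ N₀ : ℕ, ∀ N : ℕ, N₀ ≤ N →
        ∃ S : Finset (Finset (Fin (N ^ 2))),
          S.card = N ^ c ∧
          (∀ A ∈ S, A.card = N) ∧
          (∀ A ∈ S, ∀ B ∈ S, A ≠ B →
            ((A ∩ B).card : ℝ) < 2 * (c : ℝ) * Real.log N) := by
  intro c hc
  refine ⟨max 9 (4 * c + 4), fun N hN => ?_⟩
  have hN9 : 9 ≤ N := le_trans (le_max_left _ _) hN
  have hNc : 4 * c + 4 ≤ N := le_trans (le_max_right _ _) hN
  obtain ⟨p, hp, hp1, hp2⟩ := Nat.bertrand (N / 2) (by omega)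
  haveI : Fact p.Prime := ⟨hp⟩
  have hpN : p ≤ N := le_trans hp2 (by omega)
  have h2p : N < 2 * p := by omega
  have hpc : 2 * c < p := by omega
  have hp0 : 0 < p := hp.pos
  set d := 2 * c with hd
  -- polynomials indexed by coefficient vectors
  set P : (Fin d → ZMod p) → Polynomial (ZMod p) :=
    fun v => ∑ i : Fin d, Polynomial.C (v i) * Polynomial.X ^ (i : ℕ) with hP
  -- evaluation function on Fin N
  set E : (Fin d → ZMod p) → Fin N → ZMod p :=
    fun v x => (P v).eval (((x : ℕ) : ZMod p)) with hE
  have hval : ∀ (a : ZMod p), (a.val : ℕ) < N := fun a => lt_of_lt_of_le (ZMod.val_lt a) hpN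
  set g : (Fin d → ZMod p) → Fin N → Fin N :=
    fun v x => ⟨(E v x).val, hval _⟩ with hg
  have hNsq : N * N = N ^ 2 := (sq N).symm
  set φ : (Fin d → ZMod p) → Fin N → Fin (N ^ 2) :=
    fun v x => finCongr hNsq (finProdFinEquiv (x, g v x)) with hφ
  have hφinj : ∀ v, Function.Injective (φ v) := by
    intro v a b hab
    have := (finCongr hNsq).injective hab
    have := finProdFinEquiv.injective this
    exact congrArg Prod.fst this
  set A : (Fin d → ZMod p) → Finset (Fin (N ^ 2)) :=
    fun v => Finset.univ.image (φ v) with hA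
  -- if two polys give same g, they're equal as vectors
  have hkey : ∀ v w, g v = g w → v = w := by
    intro v w hgvw
    have hEvw : ∀ x : Fin N, E v x = E w x := by
      intro x
      have h1 : (g v x).val = (g w x).val := congrArg Fin.val (congrFun hgvw x)
      exact ZMod.val_injective p h1
    -- the difference polynomial vanishes on all of ZMod p
    have hq : ∀ a : ZMod p, (P v - P w).eval a = 0 := by
      intro a
      have := hEvw ⟨a.val, hval a⟩
      simp only [hE] at this
      simp only [Polynomial.eval_sub, sub_eq_zero]
      simpa [ZMod.natCast_val, ZMod.cast_id] using this
    have hq0 : P v - P w = 0 := by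
      by_contra hne
      have := aux_roots (P v - P w) hne Finset.univ (fun x _ => hq x)
      have hdeg : (P v - P w).natDegree ≤ d - 1 := by
        calc (P v - P w).natDegree ≤ (P v).natDegree ⊔ (P w).natDegree :=
              Polynomial.natDegree_sub_le _ _
          _ ≤ d - 1 := sup_le (aux_deg d (by omega) v) (aux_deg d (by omega) w)
      rw [Finset.card_univ, ZMod.card] at this
      omega
    funext i
    have hco := congrArg (fun q => Polynomial.coeff q (i : ℕ)) hq0
    simp only [Polynomial.coeff_sub, Polynomial.coeff_zero, sub_eq_zero, hP] at hco
    rw [aux_coeff, aux_coeff] at hco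
    simpa [i.2] using hco
  -- injectivity of A
  have hAinj : Function.Injective A := by
    intro v w hAvw
    apply hkey
    funext x
    have hmem : φ v x ∈ A w := by
      rw [← hAvw, hA]
      exact Finset.mem_image_of_mem _ (Finset.mem_univ x)
    rw [hA] at hmem
    obtain ⟨x', _, hx'⟩ := Finset.mem_image.mp hmem
    have := finProdFinEquiv.injective ((finCongr hNsq).injective hx')
    have h1 : x' = x := congrArg Prod.fst this
    have h2 : g w x' = g v x := congrArg Prod.snd this
    rw [h1] at h2
    exact h2.symm
  -- each set has card N
  have hcardA : ∀ v, (A v).card = N := by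
    intro v
    rw [hA]
    rw [Finset.card_image_of_injective _ (hφinj v), Finset.card_univ, Fintype.card_fin]
  -- intersection bound
  have hint : ∀ v w, v ≠ w → (A v ∩ A w).card ≤ 2 * (d - 1) := by
    intro v w hvw
    classical
    set T : Finset (Fin N) := Finset.univ.filter (fun x => g v x = g w x) with hT
    have hsub : A v ∩ A w ⊆ T.image (φ v) := by
      intro y hy
      obtain ⟨hy1, hy2⟩ := Finset.mem_inter.mp hy
      obtain ⟨x, _, hx⟩ := Finset.mem_image.mp hy1
      obtain ⟨x', _, hx'⟩ := Finset.mem_image.mp hy2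
      have heq : φ v x = φ w x' := by rw [hx, hx']
      have := finProdFinEquiv.injective ((finCongr hNsq).injective heq)
      have h1 : x = x' := congrArg Prod.fst this
      have h2 : g v x = g w x' := congrArg Prod.snd this
      rw [← h1] at h2
      apply Finset.mem_image.mpr
      exact ⟨x, Finset.mem_filter.mpr ⟨Finset.mem_univ _, h2⟩, hx⟩
    have hqne : P v - P w ≠ 0 := by
      intro h0
      apply hvw
      funext i
      have hco := congrArg (fun q => Polynomial.coeff q (i : ℕ)) h0
      simp only [Polynomial.coeff_sub, Polynomial.coeff_zero, sub_eq_zero, hP] at hco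
      rw [aux_coeff, aux_coeff] at hco
      simpa [i.2] using hco
    -- fibers of the mod-p map have size ≤ 2
    have hfiber : ∀ a ∈ T.image (fun x : Fin N => ((x : ℕ) : ZMod p)),
        (T.filter (fun x : Fin N => ((x : ℕ) : ZMod p) = a)).card ≤ 2 := by
      intro a _
      have hmap : ∀ x ∈ T.filter (fun x : Fin N => ((x : ℕ) : ZMod p) = a),
          (x : ℕ) ∈ ({a.val, a.val + p} : Finset ℕ) := by
        intro x hx
        have hxa : ((x : ℕ) : ZMod p) = a := (Finset.mem_filter.mp hx).2
        have hmod : (x : ℕ) % p = a.val := by rw [← hxa, ZMod.val_natCast]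
        have hx2p : (x : ℕ) < 2 * p := lt_of_lt_of_le x.2 (le_of_lt h2p)
        have hdm := Nat.div_add_mod (x : ℕ) p
        have hdiv : (x : ℕ) / p < 2 := Nat.div_lt_of_lt_mul (by omega)
        rw [hmod] at hdm
        simp only [Finset.mem_insert, Finset.mem_singleton]
        rcases Nat.lt_succ_iff_lt_or_eq.mp hdiv with h | h
        · rw [Nat.lt_one_iff.mp h] at hdm; omega
        · rw [h] at hdm; omega
      calc (T.filter (fun x : Fin N => ((x : ℕ) : ZMod p) = a)).card
          ≤ ({a.val, a.val + p} : Finset ℕ).card :=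
            Finset.card_le_card_of_injOn Fin.val hmap
              (fun x _ y _ h => Fin.ext h)
        _ ≤ 2 := (Finset.card_insert_le _ _).trans (by simp)
    have himg : T.image (fun x : Fin N => ((x : ℕ) : ZMod p)) ⊆
        (P v - P w).roots.toFinset := by
      intro a ha
      obtain ⟨x, hx, hxa⟩ := Finset.mem_image.mp ha
      rw [Multiset.mem_toFinset, Polynomial.mem_roots hqne]
      have hgx : g v x = g w x := (Finset.mem_filter.mp hx).2
      have hEx : E v x = E w x := ZMod.val_injective p (congrArg Fin.val hgx)
      simp only [hE] at hEx
      simp only [Polynomial.IsRoot, Polynomial.eval_sub, sub_eq_zero, ← hxa]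
      exact hEx
    have hroots : ((P v - P w).roots.toFinset).card ≤ d - 1 := by
      calc ((P v - P w).roots.toFinset).card ≤ Multiset.card (P v - P w).roots :=
            Multiset.toFinset_card_le _
        _ ≤ (P v - P w).natDegree := Polynomial.card_roots' _
        _ ≤ d - 1 := by
            calc (P v - P w).natDegree ≤ (P v).natDegree ⊔ (P w).natDegree :=
                  Polynomial.natDegree_sub_le _ _
              _ ≤ d - 1 := sup_le (aux_deg d (by omega) v) (aux_deg d (by omega) w)
    calc (A v ∩ A w).card ≤ (T.image (φ v)).card := Finset.card_le_card hsub
      _ ≤ T.card := Finset.card_image_le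
      _ ≤ 2 * (T.image (fun x : Fin N => ((x : ℕ) : ZMod p))).card :=
          Finset.card_le_mul_card_image T 2 hfiber
      _ ≤ 2 * (d - 1) := by
          have := Finset.card_le_card himg
          omega
  -- choose N^c vectors
  have hcards : (N : ℕ) ^ c ≤ (Finset.univ : Finset (Fin d → ZMod p)).card := by
    rw [Finset.card_univ, Fintype.card_fun, Fintype.card_fin, ZMod.card]
    have hp2 : N ≤ p ^ 2 := by nlinarith [Nat.div_add_mod N 2, Nat.mod_lt N (show 0<2 by norm_num)]
    calc N ^ c ≤ (p ^ 2) ^ c := Nat.pow_le_pow_left hp2 c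
      _ = p ^ d := by rw [← pow_mul, hd, mul_comm]
  obtain ⟨V, _, hVcard⟩ := Finset.exists_subset_card_eq hcards
  refine ⟨V.image A, ?_, ?_, ?_⟩
  · rw [Finset.card_image_of_injective _ hAinj, hVcard]
  · intro B hB
    obtain ⟨v, _, hv⟩ := Finset.mem_image.mp hB
    rw [← hv]; exact hcardA v
  · intro B hB B' hB' hBB'
    obtain ⟨v, _, hv⟩ := Finset.mem_image.mp hB
    obtain ⟨w, _, hw⟩ := Finset.mem_image.mp hB'
    have hvw : v ≠ w := by
      intro h; apply hBB'; rw [← hv, ← hw, h]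
    have hcard := hint v w hvw
    rw [hv, hw] at hcard
    have hlog : (2 : ℝ) < Real.log N := by
      rw [Real.lt_log_iff_exp_lt (by positivity)]
      have h1 := Real.exp_one_lt_d9
      have h2 : Real.exp 2 = Real.exp 1 * Real.exp 1 := by
        rw [← Real.exp_add]; norm_num
      have hN' : (9 : ℝ) ≤ (N : ℝ) := by exact_mod_cast hN9
      nlinarith [Real.exp_pos 1]
    have hcR : ((B ∩ B').card : ℝ) ≤ 2 * ((d : ℝ) - 1) := by
      have hd1 : 1 ≤ d := by omega
      calc ((B ∩ B').card : ℝ) ≤ ((2 * (d - 1) : ℕ) : ℝ) := by exact_mod_cast hcard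
        _ = 2 * ((d : ℝ) - 1) := by
            push_cast [Nat.cast_sub hd1]
            ring
    have hcd : (d : ℝ) = 2 * c := by exact_mod_cast congrArg Nat.cast hd
    have hc1 : (1 : ℝ) ≤ c := by exact_mod_cast hc
    nlinarith
end

section
/- Let N ≥ 2 and r ≥ 2 be integers, let n = N^(2r) and s = N^(2r−1), and let A be a fixed s-element subset of Fin n. If B is drawn uniformly at random from all s-element subsets of Fin n, then the probability that |A ∩ B| ≥ 2·N^(2r−2) is at most exp(−N^(2r−2)/3). -/
open Finset Real
open scoped ENNReal Nat

/-!
Write `k = s² / n` for the mean of `|A ∩ B|`. Double counting pairs `(T, B)` with `T` a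
`k`-subset of `A ∩ B` shows that `𝔼 C(|A ∩ B|, k) = C(s, k)² / C(n, k)`, while every `B` with
`|A ∩ B| ≥ 2k` contributes at least `C(2k, k)`; hence the tail probability is at most
`C(s, k)² / (C(2k, k) C(n, k))`. From `s^(k) ≤ s^k` and `s^(k) / n^(k) ≤ (s / n)^k` (falling
factorials) one gets `(s^(k))² ≤ k^k n^(k)`, and `(2k)^(k) = ∏_{i<k} (k + 1 + i) ≥ k^k 2^((k+1)/2)`
by `1 + x ≥ 2^x` on `[0, 1]`, which beats `k^k e^(k/3)` because `log 2 > 2/3`.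
-/

theorem exp_mul_log_two_le_one_add {x : ℝ} (hx₀ : 0 ≤ x) (hx₁ : x ≤ 1) :
    exp (x * log 2) ≤ 1 + x := by
  have := rpow_one_add_le_one_add_mul_self (s := 1) (by norm_num) hx₀ hx₁
  rwa [one_add_one_eq_two, rpow_def_of_pos two_pos, mul_one, mul_comm] at this

theorem pow_mul_exp_div_three_le_descFactorial_two_mul (k : ℕ) :
    (k : ℝ) ^ k * exp (k / 3) ≤ (2 * k).descFactorial k := by
  have hsum : ∑ i ∈ range k, ((i : ℝ) + 1) = k * (k + 1) / 2 := by
    induction k with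
    | zero => simp
    | succ m ih => rw [sum_range_succ, ih]; push_cast; ring
  rcases k.eq_zero_or_pos with rfl | hk
  · simp
  have hkR : (0 : ℝ) < k := by exact_mod_cast hk
  have hfactor : ∀ i ∈ range k, (k : ℝ) * exp ((i + 1) / k * log 2) ≤ k + 1 + i := by
    intro i hi
    have hik : (i : ℝ) + 1 ≤ k := by exact_mod_cast mem_range.1 hi
    have := exp_mul_log_two_le_one_add (x := (i + 1) / k) (by positivity)
      ((div_le_one hkR).2 hik)
    calc (k : ℝ) * exp ((i + 1) / k * log 2) ≤ k * (1 + (i + 1) / k) := by gcongr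
      _ = k + 1 + i := by field_simp; ring
  have hexp : k / 3 ≤ ∑ i ∈ range k, ((i : ℝ) + 1) / k * log 2 := by
    rw [← sum_mul, ← sum_div, hsum]
    have := log_two_gt_d9
    field_simp
    nlinarith
  rw [two_mul, Nat.add_descFactorial_eq_ascFactorial, Nat.ascFactorial_eq_prod_range]
  push_cast
  calc (k : ℝ) ^ k * exp (k / 3)
      ≤ (k : ℝ) ^ k * exp (∑ i ∈ range k, ((i : ℝ) + 1) / k * log 2) := by gcongr
    _ = ∏ i ∈ range k, ((k : ℝ) * exp ((i + 1) / k * log 2)) := by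
      rw [prod_mul_distrib, prod_const, card_range, exp_sum]
    _ ≤ ∏ i ∈ range k, ((k : ℝ) + 1 + i) := prod_le_prod (fun _ _ => by positivity) hfactor

namespace Nat

theorem descFactorial_mul_pow_le {s n : ℕ} (h : s ≤ n) :
    ∀ k, s.descFactorial k * n ^ k ≤ n.descFactorial k * s ^ k
  | 0 => by simp
  | k + 1 => by
    have hstep : (s - k) * n ≤ (n - k) * s := by
      rw [Nat.sub_mul, Nat.sub_mul, Nat.mul_comm s n]
      exact Nat.sub_le_sub_left (Nat.mul_le_mul_left k h) _
    calc s.descFactorial (k + 1) * n ^ (k + 1)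
        = ((s - k) * n) * (s.descFactorial k * n ^ k) := by
          rw [descFactorial_succ, pow_succ]; ring
      _ ≤ ((n - k) * s) * (n.descFactorial k * s ^ k) :=
          Nat.mul_le_mul hstep (descFactorial_mul_pow_le h k)
      _ = n.descFactorial (k + 1) * s ^ (k + 1) := by
          rw [descFactorial_succ, pow_succ]; ring

theorem descFactorial_sq_le {n s k : ℕ} (hn : 0 < n) (hsn : s ≤ n) (h : s * s = n * k) :
    s.descFactorial k ^ 2 ≤ k ^ k * n.descFactorial k := by
  refine Nat.le_of_mul_le_mul_right ?_ (pow_pos hn k)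
  calc s.descFactorial k ^ 2 * n ^ k = s.descFactorial k * (s.descFactorial k * n ^ k) := by ring
    _ ≤ s ^ k * (n.descFactorial k * s ^ k) :=
        Nat.mul_le_mul (descFactorial_le_pow s k) (descFactorial_mul_pow_le hsn k)
    _ = (s * s) ^ k * n.descFactorial k := by ring
    _ = k ^ k * n.descFactorial k * n ^ k := by rw [h]; ring

theorem choose_sq_le_exp_mul {n s k : ℕ} (hn : 0 < n) (hsn : s ≤ n) (h : s * s = n * k) :
    (s.choose k : ℝ) ^ 2 ≤ exp (-k / 3) * (2 * k).choose k * n.choose k := by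
  have hpow : (k : ℝ) ^ k ≤ exp (-k / 3) * (2 * k).descFactorial k := by
    rw [neg_div, exp_neg, inv_mul_eq_div, le_div_iff₀ (exp_pos _)]
    exact pow_mul_exp_div_three_le_descFactorial_two_mul k
  have hsq : (s.descFactorial k : ℝ) ^ 2 ≤ k ^ k * n.descFactorial k := by
    exact_mod_cast descFactorial_sq_le hn hsn h
  simp only [descFactorial_eq_factorial_mul_choose, Nat.cast_mul] at hpow hsq
  refine le_of_mul_le_mul_left ?_ (by positivity : (0 : ℝ) < (k ! : ℝ) ^ 2)
  calc (k ! : ℝ) ^ 2 * (s.choose k : ℝ) ^ 2 = ((k ! : ℝ) * s.choose k) ^ 2 := by ring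
    _ ≤ (k : ℝ) ^ k * (k ! * n.choose k) := hsq
    _ ≤ exp (-k / 3) * (k ! * (2 * k).choose k) * (k ! * n.choose k) := by gcongr
    _ = (k ! : ℝ) ^ 2 * (exp (-k / 3) * (2 * k).choose k * n.choose k) := by ring

end Nat

theorem PMF.toOuterMeasure_uniformOfFinset_le_ofReal {α : Type*} {s : Finset α}
    (hs : s.Nonempty) (p : α → Prop) [DecidablePred p] {x : ℝ}
    (h : (#{a ∈ s | p a} : ℝ) ≤ x * #s) :
    (uniformOfFinset s hs).toOuterMeasure {a | p a} ≤ ENNReal.ofReal x := by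
  classical
  rw [toOuterMeasure_uniformOfFinset_apply]
  refine ENNReal.div_le_of_le_mul ?_
  have hx : 0 ≤ x := nonneg_of_mul_nonneg_left ((Nat.cast_nonneg _).trans h)
    (by exact_mod_cast hs.card_pos)
  rw [← ENNReal.ofReal_natCast, ← ENNReal.ofReal_natCast, ← ENNReal.ofReal_mul hx]
  convert ENNReal.ofReal_le_ofReal h using 5
  exact Iff.rfl

section PowersetCard

variable {α : Type*} [Fintype α] [DecidableEq α]

theorem sum_powersetCard_choose_card_inter (A : Finset α) {s k : ℕ} (hks : k ≤ s) :
    ∑ B ∈ powersetCard s univ, (#(A ∩ B)).choose k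
      = (#A).choose k * (Fintype.card α - k).choose (s - k) := by
  have hsubsets : ∀ B, (#(A ∩ B)).choose k = #{T ∈ powersetCard k A | T ⊆ B} := by
    intro B
    rw [← card_powersetCard]
    congr 1
    ext T
    simp only [mem_powersetCard, mem_filter, subset_inter_iff]
    tauto
  have hsupersets : ∀ T ∈ powersetCard k A,
      #{B ∈ powersetCard s univ | T ⊆ B} = (Fintype.card α - k).choose (s - k) := by
    intro T hT
    obtain ⟨-, hTk⟩ := mem_powersetCard.1 hT
    rw [card_filter_powersetCard_subset T univ s (subset_univ T) (hTk ▸ hks), card_univ, hTk]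
  simp_rw [hsubsets, card_filter]
  rw [sum_comm]
  simp_rw [← card_filter]
  rw [sum_congr rfl hsupersets, sum_const, card_powersetCard, smul_eq_mul]

theorem card_filter_le_card_inter_mul_choose_le (A : Finset α) {s t k : ℕ} (hks : k ≤ s) :
    #{B ∈ powersetCard s univ | t ≤ #(A ∩ B)} * t.choose k
      ≤ (#A).choose k * (Fintype.card α - k).choose (s - k) := by
  rw [← sum_powersetCard_choose_card_inter A hks, card_eq_sum_ones, sum_mul, sum_filter]
  refine sum_le_sum fun B _ => ?_
  split_ifs with h
  · simpa using Nat.choose_le_choose k h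
  · exact Nat.zero_le _

theorem uniformOfFinset_powersetCard_card_inter_tail_le {s k : ℕ} (hn : 0 < Fintype.card α)
    (hsn : s ≤ Fintype.card α) (hmean : s * s = Fintype.card α * k)
    (A : Finset α) (hA : #A = s) (hne : (powersetCard s (univ : Finset α)).Nonempty) :
    (PMF.uniformOfFinset (powersetCard s univ) hne).toOuterMeasure {B | 2 * k ≤ #(A ∩ B)}
      ≤ ENNReal.ofReal (exp (-k / 3)) := by
  set n := Fintype.card α
  have hks : k ≤ s := Nat.le_of_mul_le_mul_left (hmean ▸ Nat.mul_le_mul_right s hsn) hn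
  have hcount : #{B ∈ powersetCard s univ | 2 * k ≤ #(A ∩ B)} * (2 * k).choose k * n.choose k
      ≤ s.choose k ^ 2 * n.choose s := by
    have := card_filter_le_card_inter_mul_choose_le (t := 2 * k) A hks
    rw [hA] at this
    calc _ ≤ s.choose k * (n - k).choose (s - k) * n.choose k := Nat.mul_le_mul_right _ this
      _ = s.choose k ^ 2 * n.choose s := by
          rw [sq, mul_assoc, mul_comm _ (n.choose k), ← Nat.choose_mul hks]; ring
  have hpos : (0 : ℝ) < (2 * k).choose k * n.choose k := by
    have := Nat.choose_pos (by omega : k ≤ 2 * k)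
    have := Nat.choose_pos (hks.trans hsn)
    positivity
  apply PMF.toOuterMeasure_uniformOfFinset_le_ofReal
  rw [card_powersetCard, card_univ]
  refine le_of_mul_le_mul_right ?_ hpos
  calc _ ≤ (s.choose k : ℝ) ^ 2 * n.choose s := by rw [← mul_assoc]; exact_mod_cast hcount
    _ ≤ exp (-k / 3) * (2 * k).choose k * n.choose k * n.choose s := by
        gcongr; exact Nat.choose_sq_le_exp_mul hn hsn hmean
    _ = _ := by ring

end PowersetCard

theorem hypergeometric_tail_bound_general (N r : ℕ) (hN : 2 ≤ N)
    (A : Finset (Fin (N ^ (2 * r)))) (hA : A.card = N ^ (2 * r - 1))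
    (hne : (Finset.powersetCard (N ^ (2 * r - 1))
      (Finset.univ : Finset (Fin (N ^ (2 * r))))).Nonempty) :
    (PMF.uniformOfFinset
        (Finset.powersetCard (N ^ (2 * r - 1))
          (Finset.univ : Finset (Fin (N ^ (2 * r))))) hne).toOuterMeasure
        {B | 2 * N ^ (2 * r - 2) ≤ (A ∩ B).card}
      ≤ ENNReal.ofReal (Real.exp (-((N : ℝ) ^ (2 * r - 2)) / 3)) := by
  have hmean : N ^ (2 * r - 1) * N ^ (2 * r - 1) = N ^ (2 * r) * N ^ (2 * r - 2) := by
    rcases r.eq_zero_or_pos with rfl | _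
    · simp
    · rw [← pow_add, ← pow_add]; congr 1; omega
  exact_mod_cast uniformOfFinset_powersetCard_card_inter_tail_le
    (by simp only [Fintype.card_fin]; positivity)
    (by simpa using Nat.pow_le_pow_right (by omega) (by omega)) (by simpa using hmean) A hA hne

/-- Chernoff-type tail bound for a hypergeometric random variable: if `B` is a uniformly
random `N^(2r-1)`-subset of a universe of size `N^(2r)` and `A` is a fixed
`N^(2r-1)`-subset, then `|A ∩ B| ≥ 2 N^(2r-2)` with probability at most
`exp(-N^(2r-2)/3)`. -/
theorem hypergeometric_tail_bound (N r : ℕ) (hN : 2 ≤ N) (hr : 2 ≤ r)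
    (A : Finset (Fin (N ^ (2 * r)))) (hA : A.card = N ^ (2 * r - 1))
    (hne : (Finset.powersetCard (N ^ (2 * r - 1))
      (Finset.univ : Finset (Fin (N ^ (2 * r))))).Nonempty) :
    (PMF.uniformOfFinset
        (Finset.powersetCard (N ^ (2 * r - 1))
          (Finset.univ : Finset (Fin (N ^ (2 * r))))) hne).toOuterMeasure
        {B | 2 * N ^ (2 * r - 2) ≤ (A ∩ B).card}
      ≤ ENNReal.ofReal (Real.exp (-((N : ℝ) ^ (2 * r - 2)) / 3)) :=
  hypergeometric_tail_bound_general N r hN A hA hne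
end

section
/- For all integers r ≥ 1 and c ≥ 1 there exists an integer N₀ (depending only on r and c) such that the following holds for every integer N ≥ N₀. Let A and B be subsets of Fin (N^(2r)) with |A| = N^(2r−1) and |A ∩ B| ≤ 2·N^(2r−2). If S is drawn uniformly at random from all N-element subsets of A, then the probability that |S ∩ B| ≥ 2·c·r·log N is at most N^(−c·r), where log denotes the natural logarithm. -/
/-!
Let `k = ⌈2cr log N⌉`. A bad `S` contains a `k`-subset of `A ∩ B`, so a union bound gives
`P(|S ∩ B| ≥ k) ≤ C(m, k) C(a - k, N - k) / C(a, N) = C(m, k) C(N, k) / C(a, k)` with `m = |A ∩ B|`,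
`a = |A|`. Since `m N ≤ 2a` and `k ≤ a / 2`, this is at most `4^k / k!`, and for large `N` we have
`4^k N^(cr) ≤ 8^k ≤ k!` because `N^(cr) ≤ 2^k`.
-/

open Finset Filter Real
open scoped ENNReal Nat

theorem Finset.card_filter_powersetCard_le_card_inter_le {α : Type*} [DecidableEq α]
    (A B : Finset α) {N k : ℕ} (hkN : k ≤ N) :
    #{S ∈ A.powersetCard N | k ≤ #(S ∩ B)} ≤ (#(A ∩ B)).choose k * (#A - k).choose (N - k) :=
  calc #{S ∈ A.powersetCard N | k ≤ #(S ∩ B)}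
      ≤ #(((A ∩ B).powersetCard k).biUnion fun T ↦ {S ∈ A.powersetCard N | T ⊆ S}) := by
        refine card_le_card fun S hS ↦ ?_
        obtain ⟨hS, hk⟩ := mem_filter.1 hS
        obtain ⟨T, hTS, hTk⟩ := exists_subset_card_eq hk
        have hSA := (mem_powersetCard.1 hS).1
        exact mem_biUnion.2
          ⟨T, mem_powersetCard.2 ⟨hTS.trans (inter_subset_inter hSA subset_rfl), hTk⟩,
            mem_filter.2 ⟨hS, hTS.trans inter_subset_left⟩⟩
    _ ≤ ∑ T ∈ (A ∩ B).powersetCard k, #{S ∈ A.powersetCard N | T ⊆ S} := card_biUnion_le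
    _ = ∑ T ∈ (A ∩ B).powersetCard k, (#A - k).choose (N - k) := by
        refine sum_congr rfl fun T hT ↦ ?_
        obtain ⟨hTAB, hTk⟩ := mem_powersetCard.1 hT
        rw [← hTk]
        exact card_filter_powersetCard_subset T A N (hTAB.trans inter_subset_left) (hTk ▸ hkN)
    _ = _ := by rw [sum_const, card_powersetCard, smul_eq_mul]

theorem Nat.factorial_mul_choose_mul_choose_le {m n a k : ℕ} (hmn : m * n ≤ 2 * a)
    (hka : 2 * k ≤ a) : k ! * (m.choose k * n.choose k) ≤ 4 ^ k * a.choose k := by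
  refine Nat.le_of_mul_le_mul_left ?_ k.factorial_pos
  calc k ! * (k ! * (m.choose k * n.choose k))
      = m.descFactorial k * n.descFactorial k := by
        rw [descFactorial_eq_factorial_mul_choose, descFactorial_eq_factorial_mul_choose]; ring
    _ ≤ (m * n) ^ k := by
        rw [mul_pow]; exact Nat.mul_le_mul (descFactorial_le_pow m k) (descFactorial_le_pow n k)
    _ ≤ (4 * (a + 1 - k)) ^ k := Nat.pow_le_pow_left (by omega) k
    _ = 4 ^ k * (a + 1 - k) ^ k := mul_pow ..
    _ ≤ 4 ^ k * a.descFactorial k := Nat.mul_le_mul_left _ (pow_sub_le_descFactorial a k)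
    _ = k ! * (4 ^ k * a.choose k) := by rw [descFactorial_eq_factorial_mul_choose]; ring

theorem Finset.factorial_mul_card_filter_powersetCard_le {α : Type*} [DecidableEq α]
    (A B : Finset α) {N k : ℕ} (hkN : k ≤ N) (hkA : 2 * k ≤ #A) (hAB : #(A ∩ B) * N ≤ 2 * #A) :
    k ! * #{S ∈ A.powersetCard N | k ≤ #(S ∩ B)} ≤ 4 ^ k * #(A.powersetCard N) := by
  -- `C(a, N) C(N, k) = C(a, k) C(a - k, N - k)` trades the fiber count for `C(N, k) / C(a, k)`.
  refine Nat.le_of_mul_le_mul_right ?_ (Nat.choose_pos hkN)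
  calc k ! * #{S ∈ A.powersetCard N | k ≤ #(S ∩ B)} * N.choose k
      ≤ k ! * ((#(A ∩ B)).choose k * (#A - k).choose (N - k)) * N.choose k := by
        gcongr; exact card_filter_powersetCard_le_card_inter_le A B hkN
    _ = k ! * ((#(A ∩ B)).choose k * N.choose k) * (#A - k).choose (N - k) := by ring
    _ ≤ 4 ^ k * (#A).choose k * (#A - k).choose (N - k) :=
        Nat.mul_le_mul_right _ (Nat.factorial_mul_choose_mul_choose_le hAB hkA)
    _ = 4 ^ k * #(A.powersetCard N) * N.choose k := by
        rw [card_powersetCard, mul_assoc, mul_assoc, Nat.choose_mul hkN]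

theorem PMF.toOuterMeasure_uniformOfFinset_setOf_le_inv {α : Type*} {s : Finset α}
    (hs : s.Nonempty) {p : α → Prop} [DecidablePred p] {n : ℕ} (h : #{x ∈ s | p x} * n ≤ #s) :
    (uniformOfFinset s hs).toOuterMeasure {x | p x} ≤ (n : ℝ≥0∞)⁻¹ := by
  rw [toOuterMeasure_uniformOfFinset_apply]
  simp only [Set.mem_ofPred_eq]
  rcases n.eq_zero_or_pos with rfl | hn
  · simp
  refine ENNReal.div_le_of_le_mul ?_
  rw [← ENNReal.div_eq_inv_mul, ENNReal.le_div_iff_mul_le (by simp [hn.ne']) (by simp)]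
  exact_mod_cast h

theorem pow_le_two_pow_ceil_log (N e : ℕ) : N ^ e ≤ 2 ^ ⌈2 * e * log N⌉₊ := by
  rcases N.eq_zero_or_pos with rfl | hN
  · simpa using pow_le_one₀ le_rfl zero_le_one
  have : (N : ℝ) ^ e ≤ 2 ^ ⌈2 * e * log N⌉₊ := by
    rw [← Real.log_le_log_iff (by positivity) (by positivity), Real.log_pow, Real.log_pow]
    have : 0 ≤ e * log N := by positivity
    calc e * log N ≤ 2 * e * log N * log 2 := by nlinarith [Real.log_two_gt_d9]
      _ ≤ ⌈2 * e * log N⌉₊ * log 2 := by gcongr; exact Nat.le_ceil _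
  exact_mod_cast this

theorem eventually_two_mul_ceil_log_le {C : ℝ} (hC : 0 ≤ C) :
    ∀ᶠ N : ℕ in atTop, 2 * ⌈C * log N⌉₊ ≤ N := by
  have ho : (fun x ↦ 2 * (C * log x + 1)) =o[atTop] id :=
    ((Real.isLittleO_log_id_atTop.const_mul_left C).add
      (Asymptotics.isLittleO_const_id_atTop 1)).const_mul_left 2
  have hx : ∀ᶠ x : ℝ in atTop, 2 * (C * log x + 1) ≤ x := by
    filter_upwards [ho.bound one_pos, eventually_ge_atTop 0] with x hx hx0
    rw [one_mul, id, norm_of_nonneg hx0] at hx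
    exact (le_abs_self _).trans hx
  filter_upwards [tendsto_natCast_atTop_atTop.eventually hx] with N hN
  have : (2 * ⌈C * log N⌉₊ : ℝ) ≤ N := by
    have := Nat.ceil_lt_add_one (by positivity : 0 ≤ C * log N)
    linarith
  exact_mod_cast this

theorem eventually_four_pow_mul_pow_le_factorial {e : ℕ} (he : 0 < e) :
    ∀ᶠ N : ℕ in atTop, 4 ^ ⌈2 * e * log N⌉₊ * N ^ e ≤ ⌈2 * e * log N⌉₊ ! := by
  have hk : Tendsto (fun N : ℕ ↦ ⌈2 * e * log N⌉₊) atTop atTop :=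
    tendsto_nat_ceil_atTop.comp <|
      (tendsto_log_atTop.comp tendsto_natCast_atTop_atTop).const_mul_atTop (by positivity)
  filter_upwards [hk.eventually (Nat.eventually_pow_lt_factorial_sub 8 0)] with N hN
  calc 4 ^ ⌈2 * e * log N⌉₊ * N ^ e ≤ 4 ^ ⌈2 * e * log N⌉₊ * 2 ^ ⌈2 * e * log N⌉₊ :=
        Nat.mul_le_mul_left _ (pow_le_two_pow_ceil_log N e)
    _ = 8 ^ ⌈2 * e * log N⌉₊ := by rw [← mul_pow]; norm_num
    _ ≤ ⌈2 * e * log N⌉₊ ! := hN.le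

/-- Chernoff-type tail bound for sampling without replacement: for `N` large enough
(in terms of `r`, `c`), if `A`, `B ⊆ Fin (N^(2r))` with `|A| = N^(2r-1)` and
`|A ∩ B| ≤ 2 N^(2r-2)`, and `S` is a uniformly random `N`-subset of `A`, then
`|S ∩ B| ≥ 2 c r log N` with probability at most `N^(-c r)`. -/
theorem sampling_tail_bound :
    ∀ r c : ℕ, 1 ≤ r → 1 ≤ c →
      ∃ N₀ : ℕ, ∀ N : ℕ, N₀ ≤ N →
        ∀ A B : Finset (Fin (N ^ (2 * r))),
          A.card = N ^ (2 * r - 1) →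
          (A ∩ B).card ≤ 2 * N ^ (2 * r - 2) →
          ∀ hne : (Finset.powersetCard N A).Nonempty,
            (PMF.uniformOfFinset (Finset.powersetCard N A) hne).toOuterMeasure
                {S | 2 * (c : ℝ) * (r : ℝ) * Real.log N ≤ ((S ∩ B).card : ℝ)}
              ≤ ENNReal.ofReal (((N : ℝ) ^ (c * r))⁻¹) := by
  intro r c hr hc
  obtain ⟨N₀, hN₀⟩ := eventually_atTop.1 <|
    (eventually_two_mul_ceil_log_le (by positivity : (0 : ℝ) ≤ 2 * c * r)).and <|
      (eventually_four_pow_mul_pow_le_factorial (by positivity : 0 < c * r)).and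
        (eventually_ge_atTop 1)
  refine ⟨N₀, fun N hN A B hA hAB hne ↦ ?_⟩
  obtain ⟨h2k, hfac, hN1⟩ := hN₀ N hN
  rw [Nat.cast_mul, ← mul_assoc] at hfac
  set k := ⌈2 * (c : ℝ) * r * log N⌉₊
  have hNA : N ≤ #A := hA ▸ Nat.le_self_pow (by omega) N
  have hABA : #(A ∩ B) * N ≤ 2 * #A := by
    rw [hA, show 2 * r - 1 = 2 * r - 2 + 1 by omega, pow_succ, ← mul_assoc]
    exact Nat.mul_le_mul_right N hAB
  have hcount := factorial_mul_card_filter_powersetCard_le A B (by omega : k ≤ N) (by omega) hABA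
  have hevent : {S : Finset (Fin (N ^ (2 * r))) | 2 * (c : ℝ) * r * log N ≤ #(S ∩ B)} =
      {S | k ≤ #(S ∩ B)} := by
    ext S; exact (Nat.ceil_le (a := 2 * (c : ℝ) * r * log N)).symm
  rw [hevent, ENNReal.ofReal_inv_of_pos (by positivity), ← Nat.cast_pow, ENNReal.ofReal_natCast]
  refine PMF.toOuterMeasure_uniformOfFinset_setOf_le_inv hne ?_
  refine Nat.le_of_mul_le_mul_left ?_ (pow_pos four_pos k)
  calc 4 ^ k * (#{S ∈ A.powersetCard N | k ≤ #(S ∩ B)} * N ^ (c * r))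
      = 4 ^ k * N ^ (c * r) * #{S ∈ A.powersetCard N | k ≤ #(S ∩ B)} := by ring
    _ ≤ k ! * #{S ∈ A.powersetCard N | k ≤ #(S ∩ B)} := Nat.mul_le_mul_right _ hfac
    _ ≤ 4 ^ k * #(A.powersetCard N) := hcount
end

section
/- For all integers r ≥ 1 and c ≥ 1 there exists an integer N₀ (depending only on r and c) such that for every integer N ≥ N₀ there exists a family S of N^c subsets of Fin (N^(2r)), each of size N^(2r−1), with the following property: for every two distinct sets A, B ∈ S, if a set T is drawn uniformly at random from all N-element subsets of A, then the probability that |T ∩ B| ≥ 2·c·r·log N is at most N^(−c·r), where log denotes the natural logarithm. -/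
/-!
Take a prime `P` with `N / 2 < P ≤ N` and identify `Fin (N ^ (2r))` with
`Fin (N ^ (2r - 2)) × Fin N × Fin N`. A polynomial `f` of degree at most `c` over `ZMod P`
gives the set `Fin (N ^ (2r - 2)) × graph (x ↦ f (x mod P))`; there are `P ^ (c + 1) ≥ N ^ c`
of them, and two distinct ones meet in at most `2 c N ^ (2r - 2)` points since `f - g` has at
most `c` roots. For a uniform `N`-subset `T` of `A`, a union bound over the `L`-subsets of
`A ∩ B` gives `P(|T ∩ B| ≥ L) ≤ μ ^ L / L!` with `μ = N |A ∩ B| / |A| ≤ 2c`, which is at most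
`2 ^ (-L) ≤ N ^ (-c r)` once `L = ⌈2 c r log N⌉ ≥ 2 e μ`.
-/

open Finset Polynomial Real
open scoped ENNReal

theorem Nat.descFactorial_mul_pow_le_s4 {N m : ℕ} (h : N ≤ m) (L : ℕ) :
    N.descFactorial L * m ^ L ≤ m.descFactorial L * N ^ L := by
  induction L with
  | zero => simp
  | succ L ih =>
    have key : (N - L) * m ≤ (m - L) * N :=
      calc (N - L) * m = N * m - L * m := Nat.sub_mul ..
        _ ≤ N * m - L * N := Nat.sub_le_sub_left (Nat.mul_le_mul_left L h) _
        _ = (m - L) * N := by rw [Nat.sub_mul, mul_comm m]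
    calc N.descFactorial (L + 1) * m ^ (L + 1)
        = ((N - L) * m) * (N.descFactorial L * m ^ L) := by rw [Nat.descFactorial_succ]; ring
      _ ≤ ((m - L) * N) * (m.descFactorial L * N ^ L) := Nat.mul_le_mul key ih
      _ = m.descFactorial (L + 1) * N ^ (L + 1) := by rw [Nat.descFactorial_succ]; ring

theorem Nat.choose_mul_pow_le {N m : ℕ} (h : N ≤ m) (L : ℕ) :
    N.choose L * m ^ L ≤ m.choose L * N ^ L := by
  have := Nat.descFactorial_mul_pow_le_s4 h L
  rw [Nat.descFactorial_eq_factorial_mul_choose, Nat.descFactorial_eq_factorial_mul_choose,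
    mul_assoc, mul_assoc] at this
  exact Nat.le_of_mul_le_mul_left this L.factorial_pos

section Hypergeometric

variable {α : Type*} [DecidableEq α]

theorem card_powersetCard_filter_le_card_inter_le (A B : Finset α) (N L : ℕ) :
    #{T ∈ A.powersetCard N | L ≤ #(T ∩ B)} ≤ (#(A ∩ B)).choose L * (#A - L).choose (N - L) := by
  have hsub : {T ∈ A.powersetCard N | L ≤ #(T ∩ B)} ⊆
      ((A ∩ B).powersetCard L).biUnion fun U => ((A \ U).powersetCard (N - L)).image (· ∪ U) := by
    intro T hT
    obtain ⟨hT, hL⟩ := mem_filter.1 hT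
    obtain ⟨hTA, hTN⟩ := mem_powersetCard.1 hT
    obtain ⟨U, hUT, hUL⟩ := exists_subset_card_eq hL
    have hUT' : U ⊆ T := hUT.trans inter_subset_left
    refine mem_biUnion.2 ⟨U, mem_powersetCard.2 ⟨hUT.trans (inter_subset_inter_right hTA), hUL⟩,
      mem_image.2 ⟨T \ U, mem_powersetCard.2 ⟨sdiff_subset_sdiff hTA subset_rfl, ?_⟩,
        sdiff_union_of_subset hUT'⟩⟩
    rw [card_sdiff_of_subset hUT', hTN, hUL]
  calc #{T ∈ A.powersetCard N | L ≤ #(T ∩ B)}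
      ≤ ∑ U ∈ (A ∩ B).powersetCard L, #(((A \ U).powersetCard (N - L)).image (· ∪ U)) :=
        (card_le_card hsub).trans card_biUnion_le
    _ ≤ ∑ U ∈ (A ∩ B).powersetCard L, (#A - L).choose (N - L) := by
        refine sum_le_sum fun U hU => card_image_le.trans_eq ?_
        obtain ⟨hUAB, hUL⟩ := mem_powersetCard.1 hU
        rw [card_powersetCard, card_sdiff_of_subset (hUAB.trans inter_subset_left), hUL]
    _ = (#(A ∩ B)).choose L * (#A - L).choose (N - L) := by
        rw [sum_const, card_powersetCard, smul_eq_mul]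

theorem card_powersetCard_filter_div_choose_le (A B : Finset α) {N : ℕ} (hN : N ≤ #A) (L : ℕ) :
    (#{T ∈ A.powersetCard N | L ≤ #(T ∩ B)} : ℝ) / (#A).choose N
      ≤ (N * #(A ∩ B) / #A : ℝ) ^ L / L.factorial := by
  rcases lt_or_ge N L with hNL | hLN
  · have : {T ∈ A.powersetCard N | L ≤ #(T ∩ B)} = ∅ := by
      refine filter_false_of_mem fun T hT => ?_
      have := card_le_card (inter_subset_left (s₁ := T) (s₂ := B))
      rw [(mem_powersetCard.1 hT).2] at this
      omega
    rw [this, card_empty, Nat.cast_zero, zero_div]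
    positivity
  set m := #A
  set s := #(A ∩ B)
  have hmN : (0 : ℝ) < m.choose N := by exact_mod_cast Nat.choose_pos hN
  have hmL : (0 : ℝ) < m.choose L := by exact_mod_cast Nat.choose_pos (hLN.trans hN)
  have hmpow : (0 : ℝ) < (m : ℝ) ^ L := by
    rcases Nat.eq_zero_or_pos L with rfl | hL
    · simp
    · exact pow_pos (by exact_mod_cast hL.trans_le (hLN.trans hN)) _
  -- the probability that `T` contains a fixed `L`-subset of `A`
  have hcontain : ((m - L).choose (N - L) : ℝ) / m.choose N = N.choose L / m.choose L := by
    rw [div_eq_div_iff hmN.ne' hmL.ne']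
    norm_cast
    rw [mul_comm, ← Nat.choose_mul hLN, mul_comm]
  have hratio : (N.choose L : ℝ) / m.choose L ≤ (N : ℝ) ^ L / (m : ℝ) ^ L := by
    rw [div_le_div_iff₀ hmL hmpow]
    exact_mod_cast (Nat.choose_mul_pow_le hN L).trans_eq (mul_comm _ _)
  calc (#{T ∈ A.powersetCard N | L ≤ #(T ∩ B)} : ℝ) / m.choose N
      ≤ (s.choose L * (m - L).choose (N - L) : ℕ) / m.choose N := by
        gcongr
        exact card_powersetCard_filter_le_card_inter_le A B N L
    _ = s.choose L * ((N.choose L : ℝ) / m.choose L) := by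
        rw [Nat.cast_mul, mul_div_assoc, hcontain]
    _ ≤ (s : ℝ) ^ L / L.factorial * ((N : ℝ) ^ L / (m : ℝ) ^ L) := by
        gcongr
        exact Nat.choose_le_pow_div L s
    _ = (N * s / m : ℝ) ^ L / L.factorial := by rw [div_pow, mul_pow]; ring

theorem toOuterMeasure_uniformOfFinset_powersetCard_le (A B : Finset α) (N L : ℕ)
    (hne : (A.powersetCard N).Nonempty) :
    (PMF.uniformOfFinset (A.powersetCard N) hne).toOuterMeasure {T | L ≤ #(T ∩ B)}
      ≤ ENNReal.ofReal ((N * #(A ∩ B) / #A : ℝ) ^ L / L.factorial) := by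
  have hN : N ≤ #A := powersetCard_nonempty.1 hne
  rw [PMF.toOuterMeasure_uniformOfFinset_apply, card_powersetCard, ← ENNReal.ofReal_natCast,
    ← ENNReal.ofReal_natCast, ← ENNReal.ofReal_div_of_pos (by exact_mod_cast Nat.choose_pos hN)]
  simp only [Set.mem_ofPred_eq]
  exact ENNReal.ofReal_le_ofReal (card_powersetCard_filter_div_choose_le A B hN L)

end Hypergeometric

theorem pow_div_factorial_le_inv_two_pow {μ : ℝ} (hμ : 0 ≤ μ) {L : ℕ}
    (hL : 2 * exp 1 * μ ≤ L) : μ ^ L / L.factorial ≤ (2 ^ L)⁻¹ := by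
  rcases Nat.eq_zero_or_pos L with rfl | hL0
  · simp
  have hLpos : (0 : ℝ) < L := by exact_mod_cast hL0
  have hfac : (L : ℝ) ^ L / L.factorial ≤ exp 1 ^ L := by
    rw [← exp_nat_mul, mul_one]
    exact pow_div_factorial_le_exp _ hLpos.le L
  calc μ ^ L / L.factorial = (μ / L) ^ L * ((L : ℝ) ^ L / L.factorial) := by
        rw [div_pow]; field_simp
    _ ≤ (μ / L) ^ L * exp 1 ^ L := by gcongr
    _ = (exp 1 * μ / L) ^ L := by rw [← mul_pow]; ring
    _ ≤ (2⁻¹) ^ L := by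
        gcongr
        rw [div_le_iff₀ hLpos]
        linarith
    _ = (2 ^ L)⁻¹ := inv_pow 2 L

theorem inv_two_pow_le_inv_pow {x : ℝ} (hx : 0 < x) {k L : ℕ} (hL : 2 * k * log x ≤ L) :
    ((2 : ℝ) ^ L)⁻¹ ≤ (x ^ k)⁻¹ := by
  gcongr
  rw [← exp_log hx, ← exp_log (two_pos (α := ℝ)), ← exp_nat_mul, ← exp_nat_mul, exp_le_exp]
  nlinarith [log_two_gt_d9, (Nat.cast_nonneg L : (0 : ℝ) ≤ L)]

theorem Polynomial.card_filter_eval_eq_le {R : Type*} [CommRing R] [IsDomain R] [DecidableEq R]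
    {n : ℕ} {p q : R[X]} (hp : p ∈ degreeLT R (n + 1)) (hq : q ∈ degreeLT R (n + 1))
    (hpq : p ≠ q) (s : Finset R) : #{y ∈ s | p.eval y = q.eval y} ≤ n := by
  by_contra! h
  refine hpq (eq_of_degree_sub_lt_of_eval_finset_eq {y ∈ s | p.eval y = q.eval y} ?_
    fun y hy => (mem_filter.1 hy).2)
  calc (p - q).degree < ↑(n + 1) := mem_degreeLT.1 (sub_mem hp hq)
    _ ≤ _ := by exact_mod_cast h

theorem card_filter_natCast_eq_le {N P : ℕ} (h : N ≤ 2 * P) (y : ZMod P) :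
    #{x : Fin N | ((x : ℕ) : ZMod P) = y} ≤ 2 := by
  calc #{x : Fin N | ((x : ℕ) : ZMod P) = y} ≤ #(range 2) := by
        refine card_le_card_of_injOn (fun x => (x : ℕ) / P) (fun x _ => ?_) fun a ha b hb hab => ?_
        · exact mem_range.2 (Nat.div_lt_of_lt_mul (x.2.trans_le (by rwa [mul_comm])))
        · simp only [coe_filter, mem_univ, true_and, Set.mem_ofPred_eq] at ha hb
          have hmod := (ZMod.natCast_eq_natCast_iff' a b P).1 (ha.trans hb.symm)
          exact Fin.ext (by rw [← Nat.div_add_mod a P, ← Nat.div_add_mod b P, hmod]; congr 2)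
    _ = 2 := card_range 2

theorem card_filter_eval_natCast_eq_le {N P n : ℕ} [Fact P.Prime] (h : N ≤ 2 * P)
    {p q : (ZMod P)[X]}
    (hp : p ∈ degreeLT (ZMod P) (n + 1)) (hq : q ∈ degreeLT (ZMod P) (n + 1)) (hpq : p ≠ q) :
    #{x : Fin N | p.eval ((x : ℕ) : ZMod P) = q.eval ((x : ℕ) : ZMod P)} ≤ 2 * n := by
  set agree : Finset (Fin N) := {x | p.eval ((x : ℕ) : ZMod P) = q.eval ((x : ℕ) : ZMod P)}
  calc #agree ≤ 2 * #(agree.image fun x : Fin N => ((x : ℕ) : ZMod P)) :=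
        card_le_mul_card_image _ 2 fun y _ =>
          (card_le_card (filter_subset_filter _ (subset_univ _))).trans
            (card_filter_natCast_eq_le h y)
    _ ≤ 2 * #{y : ZMod P | p.eval y = q.eval y} := by
        gcongr
        intro y
        simp only [mem_image, mem_filter, mem_univ, true_and]
        rintro ⟨x, hx, rfl⟩
        exact (mem_filter.1 hx).2
    _ ≤ 2 * n := by
        gcongr
        exact card_filter_eval_eq_le hp hq hpq univ

theorem exists_polynomial_code {N c : ℕ} (hN : 2 ^ (c + 1) ≤ N) :
    ∃ f : Fin (N ^ c) → Fin N → Fin N, ∀ v w, v ≠ w → #{x | f v x = f w x} ≤ 2 * c := by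
  have h2N : 2 ≤ N := le_trans (Nat.le_self_pow (Nat.succ_ne_zero c) 2) hN
  obtain ⟨P, hP, hNP, hPN⟩ := Nat.exists_prime_lt_and_le_two_mul (N / 2) (by omega)
  have := Fact.mk hP
  have hN2P : N ≤ 2 * P := by omega
  have hcard : N ^ c ≤ P ^ (c + 1) := by
    refine Nat.le_of_mul_le_mul_left ?_ (pow_pos two_pos (c + 1))
    calc 2 ^ (c + 1) * N ^ c ≤ N ^ (c + 1) := by rw [pow_succ' N]; exact Nat.mul_le_mul_right _ hN
      _ ≤ (2 * P) ^ (c + 1) := Nat.pow_le_pow_left hN2P _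
      _ = 2 ^ (c + 1) * P ^ (c + 1) := mul_pow ..
  obtain ⟨ι⟩ := Function.Embedding.nonempty_of_card_le (α := Fin (N ^ c))
    (β := Fin (c + 1) → ZMod P) (by simpa [ZMod.card] using hcard)
  let poly : Fin (N ^ c) → degreeLT (ZMod P) (c + 1) := fun v => (degreeLTEquiv _ _).symm (ι v)
  have hpoly : Function.Injective poly := (degreeLTEquiv _ _).symm.injective.comp ι.injective
  let val : ZMod P ↪ Fin N :=
    ⟨fun y => ⟨y.val, (ZMod.val_lt y).trans_le (by omega)⟩,
      fun a b h => ZMod.val_injective P (Fin.mk.inj h)⟩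
  refine ⟨fun v x => val ((poly v : (ZMod P)[X]).eval (x : ℕ)), fun v w hvw => ?_⟩
  simp only [EmbeddingLike.apply_eq_iff_eq]
  exact card_filter_eval_natCast_eq_le hN2P (poly v).2 (poly w).2
    fun h => hvw (hpoly (Subtype.ext h))

section Graph

variable {β γ : Type*} [Fintype β] [DecidableEq β] [DecidableEq γ]

def funGraph (f : β → γ) : Finset (β × γ) :=
  univ.image fun x => (x, f x)

@[simp]
theorem mem_funGraph {f : β → γ} {p : β × γ} : p ∈ funGraph f ↔ f p.1 = p.2 := by
  simp [funGraph, Prod.ext_iff, eq_comm]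

theorem card_funGraph (f : β → γ) : #(funGraph f) = Fintype.card β :=
  card_image_of_injective _ fun _ _ h => congrArg Prod.fst h

theorem card_funGraph_inter_funGraph (f g : β → γ) :
    #(funGraph f ∩ funGraph g) = #{x | f x = g x} := by
  have : funGraph f ∩ funGraph g = ({x | f x = g x} : Finset β).image fun x => (x, f x) := by
    ext ⟨x, y⟩
    simp only [mem_inter, mem_funGraph, mem_image, mem_filter, mem_univ, true_and, Prod.ext_iff]
    grind
  rw [this, card_image_of_injective _ fun _ _ h => congrArg Prod.fst h]

end Graph

theorem exists_finset_family_card_inter_le {α : Type*} [Fintype α] [DecidableEq α] {K N c : ℕ}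
    (hK : 0 < K) (hN : 2 ^ (c + 1) ≤ N) (hα : Fintype.card α = K * N * N) :
    ∃ S : Finset (Finset α), #S = N ^ c ∧ (∀ A ∈ S, #A = K * N) ∧
      ∀ A ∈ S, ∀ B ∈ S, A ≠ B → #(A ∩ B) ≤ 2 * c * K := by
  obtain ⟨f, hf⟩ := exists_polynomial_code hN
  let e : Fin K × Fin N × Fin N ≃ α := Fintype.equivOfCardEq (by simp [hα, mul_assoc])
  let A v : Finset α := ((univ : Finset (Fin K)) ×ˢ funGraph (f v)).map e.toEmbedding
  have hA v : #(A v) = K * N := by simp [A, card_funGraph]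
  have hAA v w : #(A v ∩ A w) = K * #{x | f v x = f w x} := by
    simp [A, ← map_inter, product_inter_product, card_funGraph_inter_funGraph]
  have hcN : 2 * c < N := (Nat.mul_lt_mul_left two_pos).2 c.lt_two_pow_self |>.trans_le
    (by rwa [← pow_succ'])
  have hinj : Function.Injective A := by
    intro v w hvw
    by_contra hne
    have h := hAA v w
    rw [← hvw, inter_self, hA] at h
    have := (Nat.eq_of_mul_eq_mul_left hK h).trans_le (hf v w hne)
    omega
  refine ⟨univ.image A, by rw [card_image_of_injective _ hinj, card_univ, Fintype.card_fin], ?_, ?_⟩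
  · simpa using hA
  · simp only [mem_image, mem_univ, true_and]
    rintro _ ⟨v, rfl⟩ _ ⟨w, rfl⟩ hvw
    rw [hAA, mul_comm]
    exact Nat.mul_le_mul_right K (hf v w fun h => hvw (h ▸ rfl))

theorem toOuterMeasure_uniformOfFinset_powersetCard_le_inv_pow {α : Type*} [DecidableEq α]
    {A B : Finset α} {K N c r : ℕ} (hA : #A = K * N) (hAB : #(A ∩ B) ≤ 2 * c * K) (hr : 1 ≤ r)
    (hN : 2 * exp 1 ≤ log N) (hne : (A.powersetCard N).Nonempty) :
    (PMF.uniformOfFinset (A.powersetCard N) hne).toOuterMeasure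
        {T | 2 * (c : ℝ) * r * log N ≤ #(T ∩ B)}
      ≤ ENNReal.ofReal (((N : ℝ) ^ (c * r))⁻¹) := by
  have hNpos : (0 : ℝ) < N :=
    Nat.cast_pos.2 (Nat.pos_of_ne_zero fun h => by simp [h] at hN; linarith [exp_pos 1])
  set L := ⌈2 * (c : ℝ) * r * log N⌉₊
  set μ : ℝ := N * #(A ∩ B) / #A
  have hμ : μ ≤ 2 * c := by
    have hinter : (#(A ∩ B) : ℝ) ≤ 2 * c * K := by exact_mod_cast hAB
    refine div_le_of_le_mul₀ (Nat.cast_nonneg _) (by positivity) ?_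
    calc (N : ℝ) * #(A ∩ B) ≤ N * (2 * c * K) := by gcongr
      _ = 2 * c * #A := by rw [hA]; push_cast; ring
  have hL : 2 * exp 1 * μ ≤ L :=
    calc 2 * exp 1 * μ ≤ 2 * c * 1 * (2 * exp 1) := by nlinarith [exp_pos 1]
      _ ≤ 2 * c * r * log N := by gcongr; exact_mod_cast hr
      _ ≤ L := Nat.le_ceil _
  calc _ ≤ (PMF.uniformOfFinset _ hne).toOuterMeasure {T | L ≤ #(T ∩ B)} :=
        MeasureTheory.measure_mono fun T hT => Nat.ceil_le.2 hT
    _ ≤ ENNReal.ofReal (μ ^ L / L.factorial) :=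
        toOuterMeasure_uniformOfFinset_powersetCard_le A B N L hne
    _ ≤ ENNReal.ofReal (((N : ℝ) ^ (c * r))⁻¹) := by
        refine ENNReal.ofReal_le_ofReal ((pow_div_factorial_le_inv_two_pow (by positivity) hL).trans
          (inv_two_pow_le_inv_pow hNpos ?_))
        push_cast
        exact (le_of_eq (by ring)).trans (Nat.le_ceil _)

/-- Existence of large randomly nearly disjoint (RND) set-systems: for `N` large enough
(in terms of `r`, `c`) there is a family of `N^c` subsets of `Fin (N^(2r))`, each of
size `N^(2r-1)`, such that for every two distinct members `A`, `B`, a uniformly random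
`N`-subset of `A` intersects `B` in at least `2 c r log N` elements with probability at
most `N^(-c r)`. -/
theorem rnd_set_system_exists :
    ∀ r c : ℕ, 1 ≤ r → 1 ≤ c →
      ∃ N₀ : ℕ, ∀ N : ℕ, N₀ ≤ N →
        ∃ S : Finset (Finset (Fin (N ^ (2 * r)))),
          S.card = N ^ c ∧
          (∀ A ∈ S, A.card = N ^ (2 * r - 1)) ∧
          (∀ A ∈ S, ∀ B ∈ S, A ≠ B →
            ∀ hne : (Finset.powersetCard N A).Nonempty,
              (PMF.uniformOfFinset (Finset.powersetCard N A) hne).toOuterMeasure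
                  {T | 2 * (c : ℝ) * (r : ℝ) * Real.log N ≤ ((T ∩ B).card : ℝ)}
                ≤ ENNReal.ofReal (((N : ℝ) ^ (c * r))⁻¹)) := by
  intro r c hr _
  refine ⟨max (2 ^ (c + 1)) ⌈exp (2 * exp 1)⌉₊, fun N hN => ?_⟩
  have hcode : 2 ^ (c + 1) ≤ N := le_of_max_le_left hN
  have hNpos : 0 < N := Nat.pos_of_ne_zero (by rintro rfl; simp at hcode)
  have hlogN : 2 * exp 1 ≤ log N :=
    (le_log_iff_exp_le (by exact_mod_cast hNpos)).2 (Nat.ceil_le.1 (le_of_max_le_right hN))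
  have hpow : N ^ (2 * r - 1) = N ^ (2 * r - 2) * N := by rw [← pow_succ]; congr 1; omega
  obtain ⟨S, hS, hSA, hSAB⟩ := exists_finset_family_card_inter_le (α := Fin (N ^ (2 * r)))
    (pow_pos hNpos _) hcode (by rw [Fintype.card_fin, ← hpow, ← pow_succ]; congr 1; omega)
  exact ⟨S, hS, fun A hA => (hSA A hA).trans hpow.symm, fun A hA B hB hAB hne =>
    toOuterMeasure_uniformOfFinset_powersetCard_le_inv_pow (hSA A hA) (hSAB A hA B hB hAB)
      hr hlogN hne⟩
end

section
/- Let C be a finite family of ℓ finite sets and let k be an integer with 1 ≤ k ≤ ℓ. Then there exists a subfamily D ⊆ C with |D| = k such that |⋃_{S∈D} S| ≥ (k/ℓ)·|⋃_{S∈C} S| (as real numbers). -/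
private lemma arith_cover (k L m N M t r : ℕ) (h1 : k * N ≤ L * M)
    (h2 : r ≤ m * t) (h3 : r + M = N) (h4 : m + k = L) (h5 : 0 < m) :
    (k + 1) * N ≤ L * (t + M) := by
  subst h3; subst h4
  obtain ⟨p, rfl⟩ : ∃ p, m = p + 1 := ⟨m - 1, by omega⟩
  nlinarith [Nat.mul_le_mul_left p h1, Nat.mul_le_mul_left (p + 1 + k) h2]

private lemma aux_cover {α : Type*} [DecidableEq α] (C : Finset (Finset α)) :
    ∀ k, k ≤ C.card → ∃ D ⊆ C, D.card = k ∧
      k * (C.sup id).card ≤ C.card * (D.sup id).card := by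
  intro k
  induction k with
  | zero => intro _; exact ⟨∅, by simp⟩
  | succ k ih =>
    intro hk
    obtain ⟨D, hDC, hDcard, hineq⟩ := ih (Nat.le_of_succ_le hk)
    -- notation
    set U := C.sup id with hU
    set V := D.sup id with hV
    have hVU : V ⊆ U := Finset.sup_mono hDC
    have hmcard : (C \ D).card = C.card - k := by
      rw [Finset.card_sdiff_of_subset hDC, hDcard]
    have hmpos : 0 < (C \ D).card := by
      rw [hmcard]; omega
    set m := (C \ D).card with hm
    -- every element of U \ V lies in some S \ V with S ∈ C \ D
    have hsub : U \ V ⊆ (C \ D).biUnion (fun S => S \ V) := by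
      intro x hx
      rw [Finset.mem_sdiff] at hx
      obtain ⟨hxU, hxV⟩ := hx
      obtain ⟨S, hS, hxS⟩ := Finset.mem_sup.mp hxU
      have hSD : S ∉ D := by
        intro hSD
        exact hxV (Finset.mem_sup.mpr ⟨S, hSD, hxS⟩)
      exact Finset.mem_biUnion.mpr ⟨S, Finset.mem_sdiff.mpr ⟨hS, hSD⟩,
        Finset.mem_sdiff.mpr ⟨hxS, hxV⟩⟩
    have hrsum : (U \ V).card ≤ ∑ S ∈ C \ D, (S \ V).card :=
      le_trans (Finset.card_le_card hsub) (Finset.card_biUnion_le)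
    -- exists a set covering at least the average number of new elements
    have hne : (C \ D).Nonempty := Finset.card_pos.mp hmpos
    have hex : ∃ S ∈ C \ D, (U \ V).card ≤ m * (S \ V).card := by
      apply Finset.exists_le_of_sum_le hne
      calc ∑ _S ∈ C \ D, (U \ V).card = m * (U \ V).card := by
            rw [Finset.sum_const, smul_eq_mul]
        _ ≤ m * ∑ S ∈ C \ D, (S \ V).card := Nat.mul_le_mul_left _ hrsum
        _ = ∑ S ∈ C \ D, m * (S \ V).card := Finset.mul_sum _ _ _
    obtain ⟨S, hSCD, hSavg⟩ := hex
    rw [Finset.mem_sdiff] at hSCD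
    obtain ⟨hSC, hSD⟩ := hSCD
    refine ⟨insert S D, Finset.insert_subset hSC hDC, ?_, ?_⟩
    · rw [Finset.card_insert_of_notMem hSD, hDcard]
    · -- arithmetic
      have hsup : (insert S D).sup id = S ∪ V := by
        rw [Finset.sup_insert]; rfl
      have hcardunion : ((insert S D).sup id).card = (S \ V).card + V.card := by
        rw [hsup, ← Finset.card_sdiff_add_card]
      rw [hcardunion]
      have hr : (U \ V).card + V.card = U.card := by
        rw [Finset.card_sdiff_add_card, Finset.union_eq_left.mpr hVU]
      -- let r = (U\V).card, t = (S\V).card, N = U.card, M = V.card, L = C.card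
      set r := (U \ V).card
      set t := (S \ V).card
      set N := U.card
      set M := V.card
      set L := C.card with hL
      -- we have: k*N ≤ L*M, r ≤ m*t, r + M = N, m = L - k, k+1 ≤ L, 1 ≤ m
      -- goal: (k+1)*N ≤ L*(t+M)
      have hmk : m + k = L := by
        rw [hm, ← hDcard, hL]
        exact Finset.card_sdiff_add_card_eq_card hDC
      exact arith_cover k L m N M t r hineq hSavg hr hmk hmpos

/-- Averaging: a finite family `C` of `ℓ` finite sets contains a subfamily of `k ≤ ℓ`
sets covering at least a `k/ℓ` fraction of the union of `C`. -/
theorem exists_subfamily_covering_fraction {α : Type*} [DecidableEq α]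
    (C : Finset (Finset α)) (k ℓ : ℕ) (hC : C.card = ℓ) (hk1 : 1 ≤ k) (hkℓ : k ≤ ℓ) :
    ∃ D ⊆ C, D.card = k ∧
      ((k : ℝ) / (ℓ : ℝ)) * ((C.sup id).card : ℝ) ≤ ((D.sup id).card : ℝ) := by
  obtain ⟨D, hDC, hDcard, hineq⟩ := aux_cover C k (by omega)
  refine ⟨D, hDC, hDcard, ?_⟩
  have hℓpos : (0 : ℝ) < (ℓ : ℝ) := by
    have : 0 < ℓ := by omega
    exact_mod_cast this
  rw [div_mul_eq_mul_div, div_le_iff₀ hℓpos]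
  have : (k : ℝ) * ((C.sup id).card : ℝ) ≤ (ℓ : ℝ) * ((D.sup id).card : ℝ) := by
    rw [← hC]
    exact_mod_cast hineq
  linarith
end

section
/- Let S be a finite family of finite sets and let k ≥ 1 and t ≥ 0 be such that every subfamily of S of size at most k has union of size at most t. Then for every integer ℓ ≥ k, every subfamily of S of size ℓ has union of size at most (ℓ·t)/k (as real numbers). -/
/-!
Removing one set from a family of `m` sets loses only the points it covers privately. These
private parts are pairwise disjoint, so some set's private part has at most a `1/m` share of the
union; removing it leaves `m - 1` sets covering at least `(m - 1)/m` of the union. Induction on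
`ℓ ≥ k` then turns the bound `t` for `k` sets into `ℓ t / k` for `ℓ` sets.
-/

open Finset

namespace Finset

variable {ι α : Type*} [DecidableEq ι] [DecidableEq α]

theorem pairwiseDisjoint_sdiff_sup_erase (D : Finset ι) (f : ι → Finset α) :
    (D : Set ι).PairwiseDisjoint (fun i => D.sup f \ (D.erase i).sup f) := by
  intro i hi j hj hij
  refine disjoint_left.2 fun x hxi hxj => ?_
  obtain ⟨hxU, hxi'⟩ := mem_sdiff.1 hxi
  obtain ⟨l, hl, hxl⟩ := mem_sup.1 hxU
  by_cases hli : l = i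
  · subst hli
    exact (mem_sdiff.1 hxj).2 (mem_sup.2 ⟨l, mem_erase.2 ⟨hij, hl⟩, hxl⟩)
  · exact hxi' (mem_sup.2 ⟨l, mem_erase.2 ⟨hli, hl⟩, hxl⟩)

theorem sum_card_sdiff_sup_erase_le (D : Finset ι) (f : ι → Finset α) :
    ∑ i ∈ D, (D.sup f \ (D.erase i).sup f).card ≤ (D.sup f).card := by
  rw [← card_biUnion (pairwiseDisjoint_sdiff_sup_erase D f)]
  exact card_le_card (biUnion_subset.2 fun _ _ => sdiff_subset)

theorem card_mul_card_sup_le_sum_card_sup_erase_add (D : Finset ι) (f : ι → Finset α) :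
    D.card * (D.sup f).card ≤ ∑ i ∈ D, ((D.erase i).sup f).card + (D.sup f).card := by
  have hsplit : ∀ i ∈ D, ((D.erase i).sup f).card + (D.sup f \ (D.erase i).sup f).card =
      (D.sup f).card := fun i _ =>
    (add_comm _ _).trans (card_sdiff_add_card_eq_card (sup_mono (erase_subset i D)))
  calc D.card * (D.sup f).card
      = ∑ i ∈ D, (((D.erase i).sup f).card + (D.sup f \ (D.erase i).sup f).card) := by
        rw [sum_congr rfl hsplit, sum_const, smul_eq_mul]
    _ ≤ ∑ i ∈ D, ((D.erase i).sup f).card + (D.sup f).card := by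
        rw [sum_add_distrib]
        exact Nat.add_le_add_left (sum_card_sdiff_sup_erase_le D f) _

theorem exists_mem_mul_card_sup_le_mul_card_sup_erase {D : Finset ι} {n : ℕ}
    (hD : D.card = n + 1) (f : ι → Finset α) :
    ∃ i ∈ D, n * (D.sup f).card ≤ (n + 1) * ((D.erase i).sup f).card := by
  have hne : D.Nonempty := card_pos.1 (by omega)
  have hsum : n * (D.sup f).card ≤ ∑ i ∈ D, ((D.erase i).sup f).card := by
    have := card_mul_card_sup_le_sum_card_sup_erase_add D f
    rw [hD, add_one_mul] at this
    omega
  apply exists_le_of_sum_le hne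
  rw [sum_const, smul_eq_mul, ← mul_sum, hD]
  exact Nat.mul_le_mul_left _ hsum

end Finset

theorem union_card_le_of_small_k_covers_general {α : Type*} [DecidableEq α]
    (S : Finset (Finset α)) (k : ℕ) (t : ℝ) (hk : 1 ≤ k)
    (hcov : ∀ D ⊆ S, D.card ≤ k → ((D.sup id).card : ℝ) ≤ t) :
    ∀ ℓ : ℕ, k ≤ ℓ → ∀ D ⊆ S, D.card = ℓ →
      ((D.sup id).card : ℝ) ≤ ((ℓ : ℝ) * t) / (k : ℝ) := by
  have hk0 : (0 : ℝ) < k := by exact_mod_cast hk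
  intro ℓ hℓ
  induction ℓ, hℓ using Nat.le_induction with
  | base =>
    intro D hDS hD
    rw [mul_div_cancel_left₀ t hk0.ne']
    exact hcov D hDS hD.le
  | succ n hkn ih =>
    intro D hDS hD
    obtain ⟨A, hA, hmul⟩ := exists_mem_mul_card_sup_le_mul_card_sup_erase hD id
    have hrest := ih (D.erase A) ((erase_subset A D).trans hDS)
      (by rw [card_erase_of_mem hA, hD, Nat.add_sub_cancel])
    have hn : (0 : ℝ) < n := hk0.trans_le (by exact_mod_cast hkn)
    refine le_of_mul_le_mul_left ?_ hn
    calc (n : ℝ) * (D.sup id).card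
        ≤ (n + 1) * ((D.erase A).sup id).card := by exact_mod_cast hmul
      _ ≤ (n + 1) * (n * t / k) := by gcongr
      _ = n * (↑(n + 1) * t / k) := by push_cast; ring

/-- If every subfamily of `S` of size at most `k` has union of size at most `t`, then
every subfamily of size `ℓ ≥ k` has union of size at most `ℓ t / k`. -/
theorem union_card_le_of_small_k_covers {α : Type*} [DecidableEq α]
    (S : Finset (Finset α)) (k : ℕ) (t : ℝ) (hk : 1 ≤ k) (ht : 0 ≤ t)
    (hcov : ∀ D ⊆ S, D.card ≤ k → ((D.sup id).card : ℝ) ≤ t) :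
    ∀ ℓ : ℕ, k ≤ ℓ → ∀ D ⊆ S, D.card = ℓ →
      ((D.sup id).card : ℝ) ≤ ((ℓ : ℝ) * t) / (k : ℝ) :=
  union_card_le_of_small_k_covers_general S k t hk hcov
end

section
/- Let U be a finite set, let S be a finite family of finite sets (over the same ambient type as U), and let τ ≥ 1 be a real number. Then there exists a finite family C of pairwise disjoint subsets of U such that: (i) every member of C has size at least τ; (ii) ⋃C ⊆ U ∩ ⋃_{S'∈S} S'; (iii) τ·|C| ≤ |⋃C|; and (iv) for every S' ∈ S, |(S' ∩ U) \ ⋃C| < τ. -/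
/-- Guarantee of the GreedySketch procedure: there is a family `C` of pairwise disjoint
subsets of `U`, each of size at least `τ`, whose union lies inside `U ∩ ⋃ S`, with
`τ * |C| ≤ |⋃ C|`, and such that any input set `S' ∈ S` has fewer than `τ` elements of
`S' ∩ U` outside `⋃ C`. -/
theorem greedySketch_exists {α : Type*} [DecidableEq α]
    (U : Finset α) (S : Finset (Finset α)) (τ : ℝ) (hτ : 1 ≤ τ) :
    ∃ C : Finset (Finset α),
      (∀ A ∈ C, ∀ B ∈ C, A ≠ B → A ∩ B = ∅) ∧
      (∀ A ∈ C, τ ≤ (A.card : ℝ)) ∧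
      (C.sup id ⊆ U ∩ S.sup id) ∧
      (τ * (C.card : ℝ) ≤ ((C.sup id).card : ℝ)) ∧
      (∀ S' ∈ S, (((S' ∩ U) \ C.sup id).card : ℝ) < τ) := by
  induction S using Finset.induction_on with
  | empty =>
    refine ⟨∅, ?_, ?_, ?_, ?_, ?_⟩ <;> simp
  | @insert S' S hS' ih =>
    obtain ⟨C, hdisj, hbig, hsub, hlb, hsmall⟩ := ih
    set N : Finset α := (S' ∩ U) \ C.sup id with hN
    by_cases hcase : (N.card : ℝ) < τ
    · refine ⟨C, hdisj, hbig, ?_, hlb, ?_⟩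
      · exact hsub.trans (Finset.inter_subset_inter (Finset.Subset.refl U)
          (Finset.sup_mono (Finset.subset_insert _ _)))
      · intro T hT
        rcases Finset.mem_insert.mp hT with rfl | hT
        · exact hcase
        · exact hsmall T hT
    · push_neg at hcase
      have hNdisjC : ∀ A ∈ C, N ∩ A = ∅ := by
        intro A hA
        apply Finset.eq_empty_of_forall_notMem
        intro x hx
        rw [Finset.mem_inter] at hx
        have : x ∈ C.sup id := Finset.le_sup (f := id) hA hx.2
        have := (Finset.mem_sdiff.mp hx.1).2
        contradiction
      have hNnotinC : N ∉ C := by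
        intro hmem
        have hcard : N.card = 0 := by
          have := hNdisjC N hmem
          simpa using this
        rw [hcard] at hcase
        norm_num at hcase; linarith
      refine ⟨insert N C, ?_, ?_, ?_, ?_, ?_⟩
      · intro A hA B hB hAB
        rcases Finset.mem_insert.mp hA with rfl | hA
        · rcases Finset.mem_insert.mp hB with rfl | hB
          · exact absurd rfl hAB
          · exact hNdisjC B hB
        · rcases Finset.mem_insert.mp hB with rfl | hB
          · rw [Finset.inter_comm]; exact hNdisjC A hA
          · exact hdisj A hA B hB hAB
      · intro A hA
        rcases Finset.mem_insert.mp hA with rfl | hA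
        · exact hcase
        · exact hbig A hA
      · rw [Finset.sup_insert]
        simp only [id]
        apply Finset.union_subset
        · intro x hx
          have hx' := Finset.mem_sdiff.mp hx
          rw [Finset.mem_inter] at hx' ⊢
          refine ⟨hx'.1.2, ?_⟩
          rw [Finset.sup_insert]
          exact Finset.mem_union_left _ (by simpa using hx'.1.1)
        · exact hsub.trans (Finset.inter_subset_inter (Finset.Subset.refl U)
            (Finset.sup_mono (Finset.subset_insert _ _)))
      · rw [Finset.sup_insert, Finset.card_insert_of_notMem hNnotinC]
        simp only [id, Finset.sup_eq_union]
        have hdisjNS : Disjoint N (C.sup id) := Finset.sdiff_disjoint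
        rw [Finset.card_union_of_disjoint hdisjNS]
        push_cast
        nlinarith [hcase, hlb]
      · intro T hT
        rw [Finset.sup_insert]
        simp only [id, Finset.sup_eq_union]
        rcases Finset.mem_insert.mp hT with rfl | hT
        · have : (T ∩ U) \ (N ∪ C.sup id) = ∅ := by
            apply Finset.eq_empty_of_forall_notMem
            intro x hx
            rw [Finset.mem_sdiff, Finset.mem_union] at hx
            have hxN : x ∈ N := Finset.mem_sdiff.mpr ⟨hx.1, fun h => hx.2 (Or.inr h)⟩
            exact hx.2 (Or.inl hxN)
          rw [this]
          simpa using lt_of_lt_of_le zero_lt_one hτ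
        · calc (((T ∩ U) \ (N ∪ C.sup id)).card : ℝ)
              ≤ (((T ∩ U) \ C.sup id).card : ℝ) := by
                exact_mod_cast Finset.card_le_card (Finset.sdiff_subset_sdiff le_rfl Finset.subset_union_right)
          _ < τ := hsmall T hT
end

section
/- Let τ ≥ 0 be a real number, r ≥ 1 an integer, O a finite set, and let (U_j)_{j=0}^{r}, (C_j)_{j=1}^{r}, (X_j)_{j=0}^{r} be finite sets satisfying: X₀ = ∅; O ⊆ U₀; and for every j ∈ {1,…,r}: C_j ⊆ U_{j−1}, U_j = C_j \ X_j, X_{j−1} ⊆ X_j, and |(O ∩ U_{j−1}) \ C_j| < τ. Then for every j ∈ {0,1,…,r}: |O ∩ U_j| ≥ |O \ X_j| − j·τ (as real numbers). -/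
/-- Invariant of the iterative sketching greedy algorithm: if at every round `j` fewer
than `τ` elements of `O ∩ U_{j-1}` are missed by the sketch `C_j`, then at every round
`j ≤ r` the current universe `U_j` retains at least `|O \ X_j| - j τ` elements of `O`. -/
theorem isgreedy_invariant {α : Type*} [DecidableEq α]
    (τ : ℝ) (hτ : 0 ≤ τ) (r : ℕ) (hr : 1 ≤ r)
    (O : Finset α) (U C X : ℕ → Finset α)
    (hX0 : X 0 = ∅) (hO : O ⊆ U 0)
    (hC : ∀ j, 1 ≤ j → j ≤ r → C j ⊆ U (j - 1))
    (hU : ∀ j, 1 ≤ j → j ≤ r → U j = C j \ X j)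
    (hXmono : ∀ j, 1 ≤ j → j ≤ r → X (j - 1) ⊆ X j)
    (hmiss : ∀ j, 1 ≤ j → j ≤ r → (((O ∩ U (j - 1)) \ C j).card : ℝ) < τ) :
    ∀ j ≤ r, ((O \ X j).card : ℝ) - (j : ℝ) * τ ≤ ((O ∩ U j).card : ℝ) := by
  intro j
  induction j with
  | zero =>
      intro _
      have h1 : O \ X 0 = O := by simp [hX0]
      have h2 : O ∩ U 0 = O := Finset.inter_eq_left.mpr hO
      simp [h1, h2]
  | succ j ih =>
      intro hjr
      have hjr' : j ≤ r := Nat.le_of_succ_le hjr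
      have ihj := ih hjr'
      have h1 : 1 ≤ j + 1 := Nat.le_add_left 1 j
      have hsub : j + 1 - 1 = j := rfl
      have hCj := hC (j + 1) h1 hjr
      have hUj := hU (j + 1) h1 hjr
      have hXm := hXmono (j + 1) h1 hjr
      have hms := hmiss (j + 1) h1 hjr
      rw [hsub] at hCj hXm hms
      -- disjointness of U j and X j
      have hdisj : ∀ x, x ∈ U j → x ∉ X j := by
        rcases Nat.eq_zero_or_pos j with h0 | hpos
        · intro x _ hx; rw [h0, hX0] at hx; exact absurd hx (Finset.notMem_empty x)
        · intro x hxU hxX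
          have := hU j hpos hjr'
          rw [this] at hxU
          exact (Finset.mem_sdiff.mp hxU).2 hxX
      -- key inclusion 1: (O \ X (j+1)) ∩ U j ⊆ (O ∩ U (j+1)) ∪ ((O ∩ U j) \ C (j+1))
      have key1 : (O \ X (j + 1)) ∩ U j ⊆ (O ∩ U (j + 1)) ∪ ((O ∩ U j) \ C (j + 1)) := by
        intro x hx
        rw [Finset.mem_inter, Finset.mem_sdiff] at hx
        obtain ⟨⟨hxO, hxX⟩, hxU⟩ := hx
        by_cases hc : x ∈ C (j + 1)
        · apply Finset.mem_union_left
          rw [Finset.mem_inter, hUj, Finset.mem_sdiff]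
          exact ⟨hxO, hc, hxX⟩
        · apply Finset.mem_union_right
          rw [Finset.mem_sdiff, Finset.mem_inter]
          exact ⟨⟨hxO, hxU⟩, hc⟩
      -- key inclusion 2: (O ∩ U j) \ ((O \ X (j+1)) ∩ U j) ⊆ (O \ X j) \ (O \ X (j+1))
      have key2 : (O ∩ U j) \ ((O \ X (j + 1)) ∩ U j) ⊆ (O \ X j) \ (O \ X (j + 1)) := by
        intro x hx
        rw [Finset.mem_sdiff, Finset.mem_inter] at hx
        obtain ⟨⟨hxO, hxU⟩, hn⟩ := hx
        have hxX1 : x ∈ X (j + 1) := by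
          by_contra hxX1
          exact hn (Finset.mem_inter.mpr ⟨Finset.mem_sdiff.mpr ⟨hxO, hxX1⟩, hxU⟩)
        rw [Finset.mem_sdiff, Finset.mem_sdiff, Finset.mem_sdiff]
        exact ⟨⟨hxO, hdisj x hxU⟩, fun h => h.2 hxX1⟩
      -- cardinal arithmetic
      have hmono : O \ X (j + 1) ⊆ O \ X j := Finset.sdiff_subset_sdiff le_rfl hXm
      have c2 : ((O \ X j) \ (O \ X (j + 1))).card
          = (O \ X j).card - (O \ X (j + 1)).card := Finset.card_sdiff_of_subset hmono
      have cle : (O \ X (j + 1)).card ≤ (O \ X j).card := Finset.card_le_card hmono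
      have cin : ((O \ X (j + 1)) ∩ U j).card ≤ (O ∩ U j).card :=
        Finset.card_le_card (by
          intro x hx
          rw [Finset.mem_inter] at hx ⊢
          exact ⟨(Finset.mem_sdiff.mp hx.1).1, hx.2⟩)
      have e1 : (O ∩ U j).card - ((O \ X (j + 1)) ∩ U j).card
          ≤ (O \ X j).card - (O \ X (j + 1)).card := by
        rw [← c2]
        calc (O ∩ U j).card - ((O \ X (j + 1)) ∩ U j).card
            ≤ ((O ∩ U j) \ ((O \ X (j + 1)) ∩ U j)).card := Finset.le_card_sdiff _ _
          _ ≤ _ := Finset.card_le_card key2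
      have e2 : ((O \ X (j + 1)) ∩ U j).card
          ≤ (O ∩ U (j + 1)).card + ((O ∩ U j) \ C (j + 1)).card := by
        calc ((O \ X (j + 1)) ∩ U j).card ≤ ((O ∩ U (j + 1)) ∪ ((O ∩ U j) \ C (j + 1))).card :=
              Finset.card_le_card key1
          _ ≤ _ := Finset.card_union_le _ _
      -- move to reals
      have e1' : ((O ∩ U j).card : ℝ) - (((O \ X (j + 1)) ∩ U j).card : ℝ)
          ≤ ((O \ X j).card : ℝ) - ((O \ X (j + 1)).card : ℝ) := by
        rw [← Nat.cast_sub cin, ← Nat.cast_sub cle]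
        exact_mod_cast e1
      have e2' : (((O \ X (j + 1)) ∩ U j).card : ℝ)
          ≤ ((O ∩ U (j + 1)).card : ℝ) + (((O ∩ U j) \ C (j + 1)).card : ℝ) := by
        exact_mod_cast e2
      push_cast
      linarith
end

section
/- Let S be a finite family of finite sets and let t ≥ 1 be a real number. Then there exists a subfamily X ⊆ S such that: (i) for every S' ∈ S \ X, |S' \ ⋃X| < |S'|/t; and (ii) |⋃X| ≥ (∑_{S'∈X} |S'|)/t (as real numbers). -/
/-- Guarantee of the coordinator's greedy selection in ISGreedy: there is a subfamily
`X ⊆ S` such that every rejected set covers fewer than a `1/t`-fraction of its size in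
elements outside `⋃ X`, and `|⋃ X|` is at least a `1/t`-fraction of the total size of
the members of `X`. -/
theorem coordinator_greedy_exists {α : Type*} [DecidableEq α]
    (S : Finset (Finset α)) (t : ℝ) (ht : 1 ≤ t) :
    ∃ X ⊆ S,
      (∀ S' ∈ S \ X, ((S' \ X.sup id).card : ℝ) < (S'.card : ℝ) / t) ∧
      (∑ S' ∈ X, (S'.card : ℝ)) / t ≤ ((X.sup id).card : ℝ) := by
  classical
  have ht0 : (0:ℝ) < t := lt_of_lt_of_le zero_lt_one ht
  set P : Finset (Finset α) → Prop := fun X =>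
    (∑ S' ∈ X, (S'.card : ℝ)) / t ≤ ((X.sup id).card : ℝ) with hP
  have h0 : (∅ : Finset (Finset α)) ∈ S.powerset.filter P := by
    simp [P, Finset.empty_subset]
  obtain ⟨X, hXmem, hXmax⟩ := Finset.exists_max_image (S.powerset.filter P)
    (fun X => X.card) ⟨∅, h0⟩
  rw [Finset.mem_filter, Finset.mem_powerset] at hXmem
  obtain ⟨hXS, hXP⟩ := hXmem
  refine ⟨X, hXS, ?_, hXP⟩
  intro S' hS'
  rw [Finset.mem_sdiff] at hS'
  by_contra h
  push_neg at h
  have hins : P (insert S' X) := by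
    have hsum : (∑ A ∈ insert S' X, (A.card : ℝ)) = (S'.card : ℝ) + ∑ A ∈ X, (A.card : ℝ) :=
      Finset.sum_insert hS'.2
    have hsup : (insert S' X).sup id = S' ∪ X.sup id := by
      simp [Finset.sup_insert]
    have hcard : ((S' \ X.sup id).card : ℝ) + ((X.sup id).card : ℝ)
        = ((S' ∪ X.sup id).card : ℝ) := by
      rw [← Nat.cast_add, Finset.card_sdiff_add_card]
    show (∑ A ∈ insert S' X, (A.card : ℝ)) / t ≤ (((insert S' X).sup id).card : ℝ)
    rw [hsum, hsup, add_div]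
    calc (S'.card : ℝ) / t + (∑ A ∈ X, (A.card : ℝ)) / t
        ≤ ((S' \ X.sup id).card : ℝ) + ((X.sup id).card : ℝ) := add_le_add h hXP
      _ = ((S' ∪ X.sup id).card : ℝ) := hcard
  have hmem : insert S' X ∈ S.powerset.filter P := by
    rw [Finset.mem_filter, Finset.mem_powerset]
    exact ⟨Finset.insert_subset hS'.1 hXS, hins⟩
  have := hXmax _ hmem
  simp [Finset.card_insert_of_notMem hS'.2] at this
end

section
/- Let V be a finite type and f : Finset V → ℝ be a monotone submodular function. Then for every Finset X and every nonempty Finset O (of elements of V), there exists o ∈ O such that f(insert o X) − f(X) ≥ (f(O) − f(X))/|O|. -/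
/-- Maximal marginal gain: for a monotone submodular `f`, some element of a nonempty
set `O` has marginal contribution to `X` at least `(f O - f X) / |O|`. -/
theorem exists_elem_marginal_ge {V : Type*} [Fintype V] [DecidableEq V]
    (f : Finset V → ℝ)
    (hmono : ∀ A B : Finset V, A ⊆ B → f A ≤ f B)
    (hsub : ∀ A B : Finset V, A ⊆ B → ∀ x : V,
      f (insert x B) - f B ≤ f (insert x A) - f A)
    (X O : Finset V) (hO : O.Nonempty) :
    ∃ o ∈ O, (f O - f X) / (O.card : ℝ) ≤ f (insert o X) - f X := by
  have key : ∀ B : Finset V, f (X ∪ B) ≤ f X + ∑ b ∈ B, (f (insert b X) - f X) := by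
    intro B
    induction B using Finset.induction_on with
    | empty => simp
    | @insert a s ha ih =>
      have h1 : X ∪ insert a s = insert a (X ∪ s) := by
        ext x; simp [or_comm, or_assoc, or_left_comm]
      have h2 := hsub X (X ∪ s) Finset.subset_union_left a
      rw [h1, Finset.sum_insert ha]
      linarith
  have hOle : f O ≤ f X + ∑ b ∈ O, (f (insert b X) - f X) :=
    le_trans (hmono O (X ∪ O) Finset.subset_union_right) (key O)
  have hcard : (0:ℝ) < O.card := by exact_mod_cast Finset.card_pos.mpr hO
  have hsum : ∑ _b ∈ O, (f O - f X) / (O.card : ℝ) ≤ ∑ b ∈ O, (f (insert b X) - f X) := by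
    rw [Finset.sum_const, nsmul_eq_mul, mul_div_cancel₀ _ (ne_of_gt hcard)]
    linarith
  exact Finset.exists_le_of_sum_le hO hsum
end

section
/- Let V be a finite type and f : Finset V → ℝ be a monotone submodular function with f(∅) ≥ 0. Let X and O be Finsets of elements of V with O nonempty, and suppose that for every o ∈ O, f(insert o X) − f(X) ≤ f(O)/(e·|O|), where e is Euler's number. Then f(X) ≥ (1 − 1/e)·f(O). -/
private lemma union_marginal_le {V : Type*} [DecidableEq V]
    (f : Finset V → ℝ)
    (hsub : ∀ A B : Finset V, A ⊆ B → ∀ x : V,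
      f (insert x B) - f B ≤ f (insert x A) - f A)
    (X : Finset V) : ∀ O : Finset V,
    f (X ∪ O) - f X ≤ ∑ o ∈ O, (f (insert o X) - f X) := by
  intro O
  induction O using Finset.induction_on with
  | empty => simp
  | @insert a S ha ih =>
    rw [Finset.sum_insert ha]
    have h1 : f (X ∪ insert a S) - f (X ∪ S) ≤ f (insert a X) - f X := by
      have := hsub X (X ∪ S) Finset.subset_union_left a
      calc f (X ∪ insert a S) - f (X ∪ S) = f (insert a (X ∪ S)) - f (X ∪ S) := by
            rw [Finset.union_insert]
        _ ≤ f (insert a X) - f X := this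
    linarith

/-- If every element of the nonempty set `O` has marginal contribution to `X` at most
`f O / (e |O|)`, then `X` is already a `(1 - 1/e)`-approximation of `O`. -/
theorem approx_of_small_marginals {V : Type*} [Fintype V] [DecidableEq V]
    (f : Finset V → ℝ)
    (hmono : ∀ A B : Finset V, A ⊆ B → f A ≤ f B)
    (hsub : ∀ A B : Finset V, A ⊆ B → ∀ x : V,
      f (insert x B) - f B ≤ f (insert x A) - f A)
    (hf0 : 0 ≤ f ∅)
    (X O : Finset V) (hO : O.Nonempty)
    (hmarg : ∀ o ∈ O, f (insert o X) - f X ≤ f O / (Real.exp 1 * (O.card : ℝ))) :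
    (1 - 1 / Real.exp 1) * f O ≤ f X := by
  have hcard : (0 : ℝ) < O.card := by exact_mod_cast Finset.card_pos.mpr hO
  have he : (0 : ℝ) < Real.exp 1 := Real.exp_pos 1
  have h1 : f O ≤ f (X ∪ O) := hmono O (X ∪ O) Finset.subset_union_right
  have h2 := union_marginal_le f hsub X O
  have h3 : ∑ o ∈ O, (f (insert o X) - f X) ≤ O.card * (f O / (Real.exp 1 * O.card)) := by
    calc ∑ o ∈ O, (f (insert o X) - f X) ≤ ∑ _o ∈ O, f O / (Real.exp 1 * O.card) :=
          Finset.sum_le_sum hmarg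
      _ = O.card * (f O / (Real.exp 1 * O.card)) := by
          rw [Finset.sum_const, nsmul_eq_mul]
  have h4 : (O.card : ℝ) * (f O / (Real.exp 1 * O.card)) = f O / Real.exp 1 := by
    field_simp
  rw [h4] at h3
  have : f O ≤ f X + f O / Real.exp 1 := by linarith
  have : (1 - 1 / Real.exp 1) * f O = f O - f O / Real.exp 1 := by ring
  linarith
end
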